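/- arXiv:2504.13558 — 3 statements merged into one kernel-verified Lean document; each statement's English description precedes it below -/
import Mathlib

section
/- Let d, n, K ∈ ℕ with d, n, K ≥ 1, let β ∈ (0,1] and p ∈ [1,∞). There exist a Lebesgue-measurable set Ω ⊆ [0,1] with Lebesgue measure at most 2^{−Kβp}, a feedforward block F_sr : ℝ^{d×n} → ℝ^{2d×n} of depth 2K and width 4dn with ReLU activation, a single-head softmax self-attention layer F_SA : ℝ^{2d×n} → ℝ^{2d×n}, and an affine map A : ℝ^{2d×n} → ℝ^{d×n} such that A(F_SA(F_sr(X))) = Z(X) for every X ∈ ([0,1] ∖ Ω)^{d×n}. -/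
open Finset Real Set MeasureTheory

noncomputable section

/-- Matrix–vector product with explicit inner dimension `m`. -/
def mulVecN (W : ℕ → ℕ → ℝ) (m : ℕ) (v : ℕ → ℝ) : ℕ → ℝ :=
  fun i => ∑ j ∈ Finset.range m, W i j * v j

/-- Matrix–matrix product with explicit inner dimension `m`. -/
def matMulN (A : ℕ → ℕ → ℝ) (m : ℕ) (B : ℕ → ℕ → ℝ) : ℕ → ℕ → ℝ :=
  fun i j => ∑ t ∈ Finset.range m, A i t * B t j

/-- The ReLU activation. -/
def reluF : ℝ → ℝ := fun x => max x 0

/-- The floor activation. -/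
def floorF : ℝ → ℝ := fun x => (⌊x⌋ : ℝ)

/-- Hidden layers of a feedforward network acting on vectors:
`ffLayers dims Wt b act l x` is the output of the `l`-th hidden layer. -/
def ffLayers (dims : ℕ → ℕ) (Wt : ℕ → ℕ → ℕ → ℝ) (b : ℕ → ℕ → ℝ)
    (act : ℕ → ℕ → ℝ → ℝ) : ℕ → (ℕ → ℝ) → ℕ → ℝ
  | 0, x => x
  | l + 1, x => fun i =>
      act (l + 1) i (mulVecN (Wt (l + 1)) (dims l) (ffLayers dims Wt b act l x) i + b (l + 1) i)

/-- `f` is a feedforward neural network function from `ℝ^k` to `ℝ^{k'}` of depth `L` and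
width `W`, whose activation functions (which may vary between rows and layers) all belong
to `A`.  Vectors are represented as functions `ℕ → ℝ`; only the first `k` coordinates of the
input and the first `k'` coordinates of the output are relevant. -/
def IsFFNet (k k' L W : ℕ) (A : Set (ℝ → ℝ)) (f : (ℕ → ℝ) → ℕ → ℝ) : Prop :=
  ∃ (dims : ℕ → ℕ) (Wt : ℕ → ℕ → ℕ → ℝ) (b : ℕ → ℕ → ℝ) (act : ℕ → ℕ → ℝ → ℝ),
    dims 0 = k ∧ dims L = k' ∧ (∀ l, 0 < l → l < L → dims l ≤ W) ∧
    (∀ l i, act l i ∈ A) ∧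
    ∀ x, f x = mulVecN (Wt L) (dims (L - 1)) (ffLayers dims Wt b act (L - 1) x)

/-- Hidden layers of a feedforward block acting columnwise on matrices, with
column-dependent biases. -/
def ffBlockLayers (dims : ℕ → ℕ) (Wt : ℕ → ℕ → ℕ → ℝ) (B : ℕ → ℕ → ℕ → ℝ)
    (act : ℕ → ℕ → ℝ → ℝ) : ℕ → (ℕ → ℕ → ℝ) → ℕ → ℕ → ℝ
  | 0, X => X
  | l + 1, X => fun i s =>
      act (l + 1) i
        (mulVecN (Wt (l + 1)) (dims l) (fun t => ffBlockLayers dims Wt B act l X t s) i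
          + B (l + 1) i s)

/-- `F` is a feedforward block from `ℝ^{k×n}` to `ℝ^{k'×n}` of depth `L` and width `W`,
with activation functions in `A`; it acts on each column by the same affine maps, the bias
matrices may have distinct columns, and in each layer every row uses some activation from
`A` (possibly varying between rows and layers). -/
def IsFFBlock (k k' L W : ℕ) (A : Set (ℝ → ℝ)) (F : (ℕ → ℕ → ℝ) → ℕ → ℕ → ℝ) : Prop :=
  ∃ (dims : ℕ → ℕ) (Wt : ℕ → ℕ → ℕ → ℝ) (B : ℕ → ℕ → ℕ → ℝ) (act : ℕ → ℕ → ℝ → ℝ),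
    dims 0 = k ∧ dims L = k' ∧ (∀ l, 0 < l → l < L → dims l ≤ W) ∧
    (∀ l i, act l i ∈ A) ∧
    ∀ X i s,
      F X i s = mulVecN (Wt L) (dims (L - 1))
        (fun t => ffBlockLayers dims Wt B act (L - 1) X t s) i

/-- `F` is a single-head softmax self-attention layer on `m × n` matrices:
`F(X) = X + W_O W_V X σ_S[(W_K X)ᵀ (W_Q X)]`, where the softmax is applied columnwise. -/
def IsSelfAttn (m n : ℕ) (F : (ℕ → ℕ → ℝ) → ℕ → ℕ → ℝ) : Prop :=
  ∃ (hs : ℕ) (WO WV WK WQ : ℕ → ℕ → ℝ),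
    ∀ X i j,
      F X i j = X i j +
        matMulN (matMulN WO hs WV) m
          (matMulN X n (fun a b =>
            Real.exp (∑ u ∈ Finset.range hs, matMulN WK m X u a * matMulN WQ m X u b) /
              ∑ t ∈ Finset.range n,
                Real.exp (∑ u ∈ Finset.range hs, matMulN WK m X u t * matMulN WQ m X u b))) i j

/-- An affine map on matrices, acting columnwise: `A(Y) = W Y + b` with `W` a `k'×k`
matrix and `b` a bias matrix. -/
def IsAffineM (k : ℕ) (A : (ℕ → ℕ → ℝ) → ℕ → ℕ → ℝ) : Prop :=
  ∃ (W : ℕ → ℕ → ℝ) (b : ℕ → ℕ → ℝ),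
    ∀ Y i s, A Y i s = mulVecN W k (fun t => Y t s) i + b i s

/-- Embedding of a `d × n` real matrix into the `ℕ`-indexed representation. -/
def embedM {d n : ℕ} (X : Fin d → Fin n → ℝ) : ℕ → ℕ → ℝ :=
  fun i j => if h : i < d ∧ j < n then X ⟨i, h.1⟩ ⟨j, h.2⟩ else 0

/-- The Hölder class `H^β_Q([0,1]^{d×n}, ℝ^{d×n})`: every component of `f` is
`(β,Q)`-Hölder on the unit cube w.r.t. the entrywise sup distance. -/
def HolderClassM (d n : ℕ) (β Q : ℝ)
    (f : (Fin d → Fin n → ℝ) → Fin d → Fin n → ℝ) : Prop :=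
  ∀ X Y : Fin d → Fin n → ℝ,
    (∀ p q, X p q ∈ Set.Icc (0:ℝ) 1) → (∀ p q, Y p q ∈ Set.Icc (0:ℝ) 1) →
    ∀ r s, |f X r s - f Y r s| ≤ Q * dist X Y ^ β

/-- The `j`-th binary digit of `x` (terminating expansion for dyadic rationals). -/
def binDigit (x : ℝ) (j : ℕ) : ℤ :=
  ⌊(2:ℝ) ^ j * x⌋ - 2 * ⌊(2:ℝ) ^ (j - 1) * x⌋

/-- The truncated inner function `φ_K(x) = Σ_{j=1}^K 2 a_j^x 3^{-1-D(j-1)}`. -/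
def phiK (D K : ℕ) (x : ℝ) : ℝ :=
  ∑ j ∈ Finset.Icc 1 K, 2 * (binDigit x j : ℝ) * ((3:ℝ) ^ (1 + D * (j - 1)))⁻¹

/-- The inner function `φ(x) = Σ_{j=1}^∞ 2 a_j^x 3^{-1-D(j-1)}`. -/
def phiInf (D : ℕ) (x : ℝ) : ℝ :=
  ∑' j : ℕ, 2 * (binDigit x (j + 1) : ℝ) * ((3:ℝ) ^ (1 + D * j))⁻¹

/-- The inner matrix `Z(X)`: `Z(X)_{rs}` is independent of `r` and equals
`3^{Kdn+1} Σ_{q=1}^n Σ_{p=1}^d 3^{-((p-1)n+q)} φ_K(X_{pq}) + 1 + (s-1) 3^{Kdn}`. -/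
def innerZ (d n K : ℕ) (X : Fin d → Fin n → ℝ) (s : Fin n) : ℝ :=
  (3:ℝ) ^ (K * d * n + 1) *
      (∑ q : Fin n, ∑ p : Fin d,
        ((3:ℝ) ^ ((p : ℕ) * n + (q : ℕ) + 1))⁻¹ * phiK (d * n) K (X p q))
    + 1 + (s : ℕ) * (3:ℝ) ^ (K * d * n)

/-- The Kolmogorov–Arnold inner sum `3 Σ_{q=1}^n Σ_{p=1}^d 3^{-((p-1)n+q)} φ(X_{pq})`. -/
def innerKA (d n : ℕ) (X : Fin d → Fin n → ℝ) : ℝ :=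
  3 * ∑ q : Fin n, ∑ p : Fin d,
    ((3:ℝ) ^ ((p : ℕ) * n + (q : ℕ) + 1))⁻¹ * phiInf (d * n) (X p q)

/-- The unit cube `[0,1]^{d×n}`. -/
def unitBox (d n : ℕ) : Set (Fin d → Fin n → ℝ) :=
  {X | ∀ p q, X p q ∈ Set.Icc (0:ℝ) 1}

/-- `f` admits a Kolmogorov–Arnold representation with outer functions `g r s`
(defined on the middle-thirds Cantor set), which are Hölder with exponent
`β log 2 / (dn log 3)` and constant `2^β Q`. -/
def HasKARep (d n : ℕ) (β Q : ℝ) (f : (Fin d → Fin n → ℝ) → Fin d → Fin n → ℝ)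
    (g : Fin d → Fin n → ℝ → ℝ) : Prop :=
  (∀ r s, ∀ x ∈ cantorSet, ∀ y ∈ cantorSet,
      |g r s x - g r s y| ≤ (2:ℝ) ^ β * Q * |x - y| ^ (β * Real.log 2 / ((d * n : ℕ) * Real.log 3))) ∧
  (∀ X ∈ unitBox d n, ∀ r s, f X r s = g r s (innerKA d n X))

/-!
The binary digits of an entry `x ∈ [0, 1)` are read off the orbit `τᵢ = fract (2ⁱ x)`:
`a_{i+1} = ⌊2 τᵢ⌋` and `τ_{i+1} = 2 τᵢ - a_{i+1}`. ReLU networks cannot compute the jump of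
`⌊2 τ⌋` at `τ = 1/2` exactly, but the difference of two ramps of slope `1/ε` does, as long as
`τ` stays out of `(1/2 - ε, 1/2)`. Two hidden layers per digit (a threshold layer and a carry
layer) accumulate `φ_K(x)` scaled by the column-dependent weight of the entry, on `d` copies
running side by side in each column. The exceptional set where some `τᵢ`, `i < K`, falls into
the gap has measure at most `2Kε`. Finally, an attention layer with zero keys and queries
averages over the columns, which yields the sum over all entries, and the affine map adds
the column offsets of `Z(X)`.
-/

lemma Int.floor_two_mul (y : ℝ) : ⌊2 * y⌋ = 2 * ⌊y⌋ + ⌊2 * Int.fract y⌋ := by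
  rw [add_comm, ← Int.floor_add_intCast, Int.fract]; push_cast; ring_nf

lemma Int.fract_two_mul (y : ℝ) : Int.fract (2 * y) = Int.fract (2 * Int.fract y) := by
  rw [Int.fract, Int.floor_two_mul, Int.fract, Int.fract]; push_cast; ring

lemma binDigit_succ (x : ℝ) (j : ℕ) : binDigit x (j + 1) = ⌊2 * Int.fract (2 ^ j * x)⌋ := by
  rw [binDigit, Nat.add_sub_cancel, pow_succ, mul_comm _ (2:ℝ), mul_assoc, Int.floor_two_mul]
  ring

lemma floor_two_mul_eq_ite {τ : ℝ} (hτ : τ ∈ Set.Ico 0 1) :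
    (⌊2 * τ⌋ : ℝ) = if 1 / 2 ≤ τ then 1 else 0 := by
  obtain ⟨h0, h1⟩ := hτ
  split_ifs with h
  · exact_mod_cast Int.floor_eq_iff.2 ⟨by push_cast; linarith, by push_cast; linarith⟩
  · exact_mod_cast Int.floor_eq_iff.2 ⟨by push_cast; linarith, by push_cast; linarith⟩

lemma reluF_threshold_sub {ε γ τ : ℝ} (hε : 0 < ε) (hγ : γ ∈ Set.Icc 0 1) (hτ : τ ∈ Set.Ico 0 1)
    (hgap : τ ∉ Set.Ioo (1 / 2 - ε) (1 / 2)) :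
    reluF ((τ - 1 / 2) / ε + γ) - reluF ((τ - 1 / 2) / ε) = γ * ⌊2 * τ⌋ := by
  rw [floor_two_mul_eq_ite hτ, reluF, reluF]
  split_ifs with h
  · have : 0 ≤ (τ - 1 / 2) / ε := div_nonneg (by linarith) hε.le
    rw [max_eq_left (by linarith [hγ.1]), max_eq_left this]; ring
  · have : (τ - 1 / 2) / ε ≤ -1 := by
      rw [div_le_iff₀ hε]; by_contra! h'; exact hgap ⟨by linarith, by linarith⟩
    rw [max_eq_right (by linarith [hγ.2]), max_eq_right (by linarith)]; ring

lemma reluF_floor_two_mul_add {c τ : ℝ} (hc : c ∈ Set.Icc 0 1) (hτ : τ ∈ Set.Ico 0 1) :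
    reluF (⌊2 * τ⌋ + (c - 1)) = c * ⌊2 * τ⌋ := by
  rw [floor_two_mul_eq_ite hτ, reluF]
  split_ifs
  · rw [max_eq_left (by linarith [hc.1])]; ring
  · rw [max_eq_right (by linarith [hc.2])]; ring

lemma Finset.sum_range_mul_eq_sum_sum {M : Type*} [AddCommMonoid M] (m d : ℕ) (f : ℕ → M) :
    ∑ t ∈ range (m * d), f t = ∑ k ∈ range m, ∑ p ∈ range d, f (p + k * d) := by
  induction m with
  | zero => simp
  | succ m ih => rw [Nat.succ_mul, Finset.sum_range_add, ih, Finset.sum_range_succ]; simp [add_comm]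

section Parallel

variable (d : ℕ) (w : ℕ → ℕ → ℕ → ℝ) (b : ℕ → ℕ → ℕ → ℕ → ℝ) (act : ℕ → ℕ → ℝ → ℝ)

def parallelWeight (l i t : ℕ) : ℝ := if t % d = i % d then w l (i / d) (t / d) else 0

def parallelBias (l i s : ℕ) : ℝ := b (i % d) s l (i / d)

def parallelAct (l i : ℕ) : ℝ → ℝ := act l (i / d)

def parallelBlock (m : ℕ → ℕ) (L : ℕ) (X : ℕ → ℕ → ℝ) (i s : ℕ) : ℝ :=
  mulVecN (parallelWeight d w L) (m (L - 1) * d)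
    (fun t => ffBlockLayers (fun l => m l * d) (parallelWeight d w) (parallelBias d b)
      (parallelAct d act) (L - 1) X t s) i

variable {d} {p : ℕ}

lemma mulVecN_parallelWeight (hp : p < d) (l m k : ℕ) (v : ℕ → ℝ) :
    mulVecN (parallelWeight d w l) (m * d) v (p + k * d)
      = mulVecN (w l) m (fun k' => v (p + k' * d)) k := by
  simp only [mulVecN, parallelWeight, Finset.sum_range_mul_eq_sum_sum, ite_mul, zero_mul,
    Nat.add_mul_mod_self_right, Nat.mod_eq_of_lt hp,
    Nat.add_mul_div_right _ _ (p.zero_le.trans_lt hp), Nat.div_eq_of_lt hp, zero_add]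
  refine Finset.sum_congr rfl fun k' _ => ?_
  rw [Finset.sum_eq_single_of_mem p (mem_range.2 hp) fun x hx hxp => if_neg <| by
    rwa [Nat.mod_eq_of_lt (mem_range.1 hx)]]
  simp [Nat.mod_eq_of_lt hp, Nat.div_eq_of_lt hp]

lemma ffBlockLayers_parallel (hp : p < d) (m : ℕ → ℕ) (l k : ℕ) (X : ℕ → ℕ → ℝ) (s : ℕ) :
    ffBlockLayers (fun l => m l * d) (parallelWeight d w) (parallelBias d b)
        (parallelAct d act) l X (p + k * d) s
      = ffLayers m w (b p s) act l (fun k => X (p + k * d) s) k := by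
  induction l generalizing k with
  | zero => rfl
  | succ l ih =>
    simp only [ffBlockLayers, ffLayers, parallelAct, parallelBias, mulVecN_parallelWeight w hp, ih,
      Nat.add_mul_mod_self_right, Nat.mod_eq_of_lt hp,
      Nat.add_mul_div_right _ _ (p.zero_le.trans_lt hp), Nat.div_eq_of_lt hp, zero_add]

lemma parallelBlock_apply (hp : p < d) (m : ℕ → ℕ) (L k : ℕ) (X : ℕ → ℕ → ℝ) (s : ℕ) :
    parallelBlock d w b act m L X (p + k * d) s
      = mulVecN (w L) (m (L - 1))
          (ffLayers m w (b p s) act (L - 1) fun k => X (p + k * d) s) k := by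
  simp only [parallelBlock, mulVecN_parallelWeight w hp, ffBlockLayers_parallel w b act hp]

lemma isFFBlock_parallelBlock {m : ℕ → ℕ} {L W : ℕ} {A : Set (ℝ → ℝ)} (hm : m 0 = 1)
    (hwidth : ∀ l, 0 < l → l < L → m l * d ≤ W) (hact : ∀ l k, act l k ∈ A) :
    IsFFBlock d (m L * d) L W A (parallelBlock d w b act m L) :=
  ⟨fun l => m l * d, parallelWeight d w, parallelBias d b, parallelAct d act, by simp [hm], rfl,
    hwidth, fun l i => hact l _, fun _ _ _ => rfl⟩

end Parallel

/-! The scalar network extracting `K` digits of one entry and summing them with weights `c j`.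
Odd (threshold) layers hold the slots `(τ, ramp + γ, ramp, acc)` with `ramp = (τ - 1/2)/ε`;
even (carry) layers hold `(τ', acc, c·digit, 0)`. The last threshold layer uses `γ = c K`
because the readout layer has no bias. -/

namespace DigitNet

variable (ε : ℝ) (K : ℕ) (c : ℕ → ℝ)

def slots (l : ℕ) : ℕ := if l = 0 then 1 else if l = 2 * K then 2 else 4

def thresholdWeight : ℕ → ℕ → ℝ
  | 0, 0 => 1
  | 1, 0 => ε⁻¹
  | 2, 0 => ε⁻¹
  | 3, 1 => 1
  | 3, 2 => 1
  | _, _ => 0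

def carryWeight : ℕ → ℕ → ℝ
  | 0, 0 => 2
  | 0, 1 => -1
  | 0, 2 => 1
  | 1, 3 => 1
  | 2, 1 => 1
  | 2, 2 => -1
  | _, _ => 0

def readoutWeight : ℕ → ℕ → ℝ
  | 0, 1 => 1
  | 0, 2 => -1
  | 0, 3 => 1
  | _, _ => 0

def weight (l : ℕ) : ℕ → ℕ → ℝ :=
  if l = 2 * K then readoutWeight else if Odd l then thresholdWeight ε else carryWeight

def thresholdBias (γ : ℝ) : ℕ → ℝ
  | 1 => γ - (2 * ε)⁻¹
  | 2 => -(2 * ε)⁻¹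
  | _ => 0

def carryBias (γ : ℝ) : ℕ → ℝ
  | 2 => γ - 1
  | _ => 0

def bias (l : ℕ) : ℕ → ℝ :=
  if Odd l then thresholdBias ε (if l + 1 = 2 * K then c K else 1) else carryBias (c (l / 2))

def layer (u : ℕ → ℝ) (l : ℕ) : ℕ → ℝ :=
  ffLayers (slots K) (weight ε K) (bias ε K c) (fun _ _ => reluF) l u

def reluLayer (w : ℕ → ℕ → ℝ) (m : ℕ) (b v : ℕ → ℝ) (k : ℕ) : ℝ := reluF (mulVecN w m v k + b k)

def ThresholdState (w : ℕ → ℝ) (τ γ a : ℝ) : Prop :=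
  w 0 = τ ∧ w 1 - w 2 = γ * ⌊2 * τ⌋ ∧ w 3 = a

def CarryState (w : ℕ → ℝ) (τ e a : ℝ) : Prop :=
  w 0 = τ ∧ w 1 = a ∧ w 2 = e

variable {ε} in
lemma thresholdState_reluLayer {m : ℕ} {v : ℕ → ℝ} {τ γ a : ℝ} (hε : 0 < ε)
    (hγ : γ ∈ Set.Icc 0 1) (hτ : τ ∈ Set.Ico 0 1) (hgap : τ ∉ Set.Ioo (1 / 2 - ε) (1 / 2))
    (ha : 0 ≤ a) (h0 : mulVecN (thresholdWeight ε) m v 0 = τ)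
    (h3 : mulVecN (thresholdWeight ε) m v 3 = a) :
    ThresholdState (reluLayer (thresholdWeight ε) m (thresholdBias ε γ) v) τ γ a := by
  have hrow : ∀ k, k = 1 ∨ k = 2 →
      mulVecN (thresholdWeight ε) m v k = ε⁻¹ * τ := by
    rintro k (rfl | rfl) <;>
    · rw [← h0, mulVecN, mulVecN, Finset.mul_sum]
      refine Finset.sum_congr rfl fun j _ => ?_
      rcases j with _ | _ | _ | _ | j <;> simp [thresholdWeight]
  refine ⟨?_, ?_, ?_⟩
  · simp only [reluLayer, h0, thresholdBias, add_zero]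
    exact max_eq_left hτ.1
  · simp only [reluLayer, hrow 1 (.inl rfl), hrow 2 (.inr rfl), thresholdBias]
    rw [← reluF_threshold_sub hε hγ hτ hgap]
    congr 2 <;> field_simp <;> ring
  · simp only [reluLayer, h3, thresholdBias, add_zero]
    exact max_eq_left ha

lemma carryState_reluLayer {v : ℕ → ℝ} {τ γ a : ℝ} (hv : ThresholdState v τ 1 a)
    (hγ : γ ∈ Set.Icc 0 1) (hτ : τ ∈ Set.Ico 0 1) (ha : 0 ≤ a) :
    CarryState (reluLayer carryWeight 4 (carryBias γ) v) (Int.fract (2 * τ)) (γ * ⌊2 * τ⌋) a := by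
  obtain ⟨h0, h12, h3⟩ := hv
  simp only [CarryState, reluLayer, mulVecN, Finset.sum_range_succ, Finset.sum_range_zero,
    carryWeight, carryBias]
  refine ⟨?_, ?_, ?_⟩
  · rw [show 0 + 2 * v 0 + -1 * v 1 + 1 * v 2 + 0 * v 3 + 0 = Int.fract (2 * τ) by
      rw [Int.fract]; linear_combination 2 * h0 - h12]
    exact max_eq_left (Int.fract_nonneg _)
  · rw [show 0 + 0 * v 0 + 0 * v 1 + 0 * v 2 + 1 * v 3 + 0 = a by linarith]
    exact max_eq_left ha
  · rw [show 0 + 0 * v 0 + 1 * v 1 + -1 * v 2 + 0 * v 3 + (γ - 1) = ⌊2 * τ⌋ + (γ - 1) by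
      linear_combination h12]
    exact reluF_floor_two_mul_add hγ hτ

variable {ε K c}

lemma layer_succ (u : ℕ → ℝ) (l : ℕ) :
    layer ε K c u (l + 1)
      = reluLayer (weight ε K (l + 1)) (slots K l) (bias ε K c (l + 1)) (layer ε K c u l) :=
  rfl

lemma weight_odd {l : ℕ} (hl : Odd l) : weight ε K l = thresholdWeight ε := by
  rw [weight, if_neg fun h : l = 2 * K => Nat.not_even_iff_odd.2 hl (h ▸ even_two_mul K), if_pos hl]

lemma weight_even {l : ℕ} (hl : Even l) (hlK : l < 2 * K) : weight ε K l = carryWeight := by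
  rw [weight, if_neg hlK.ne, if_neg (Nat.not_odd_iff_even.2 hl)]

lemma bias_odd (i : ℕ) :
    bias ε K c (2 * i + 1) = thresholdBias ε (if i + 1 = K then c K else 1) := by
  rw [bias, if_pos (odd_two_mul_add_one i)]
  congr 2
  simp only [eq_iff_iff]
  omega

lemma bias_even (i : ℕ) : bias ε K c (2 * i + 2) = carryBias (c (i + 1)) := by
  rw [bias, if_neg (by simp [parity_simps]), show (2 * i + 2) / 2 = i + 1 by omega]

lemma slots_hidden {l : ℕ} (hl : 0 < l) (hlK : l < 2 * K) : slots K l = 4 := by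
  rw [slots, if_neg hl.ne', if_neg hlK.ne]

lemma layer_odd_eq (u : ℕ → ℝ) (i : ℕ) :
    layer ε K c u (2 * i + 1) = reluLayer (thresholdWeight ε) (slots K (2 * i))
      (thresholdBias ε (if i + 1 = K then c K else 1)) (layer ε K c u (2 * i)) := by
  rw [layer_succ, weight_odd (odd_two_mul_add_one i), bias_odd]

lemma layer_even_eq (u : ℕ → ℝ) {i : ℕ} (hi : i + 1 < K) :
    layer ε K c u (2 * i + 2) = reluLayer carryWeight 4 (carryBias (c (i + 1)))
      (layer ε K c u (2 * i + 1)) := by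
  rw [layer_succ, weight_even (by simp [parity_simps]) (by omega), bias_even,
    slots_hidden (by omega) (by omega)]

def digitSum (c : ℕ → ℝ) (x : ℝ) (i : ℕ) : ℝ := ∑ j ∈ range i, c (j + 1) * binDigit x (j + 1)

lemma digitSum_nonneg (hc : ∀ j, c j ∈ Set.Icc 0 1) (x : ℝ) (i : ℕ) : 0 ≤ digitSum c x i := by
  refine Finset.sum_nonneg fun j _ => mul_nonneg (hc _).1 ?_
  rw [binDigit_succ]
  exact_mod_cast Int.floor_nonneg.2 (mul_nonneg zero_le_two (Int.fract_nonneg _))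

lemma digitSum_succ (c : ℕ → ℝ) (x : ℝ) (i : ℕ) :
    digitSum c x (i + 1) = digitSum c x i + c (i + 1) * ⌊2 * Int.fract (2 ^ i * x)⌋ := by
  rw [digitSum, Finset.sum_range_succ, binDigit_succ]; rfl

lemma thresholdState_layer (hε : 0 < ε) (hc : ∀ j, c j ∈ Set.Icc 0 1) {x : ℝ} (hx : x ∈ Set.Ico 0 1)
    (hgap : ∀ i < K, Int.fract (2 ^ i * x) ∉ Set.Ioo (1 / 2 - ε) (1 / 2))
    {u : ℕ → ℝ} (hu : u 0 = x) :
    ∀ i < K, ThresholdState (layer ε K c u (2 * i + 1)) (Int.fract (2 ^ i * x))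
      (if i + 1 = K then c K else 1) (digitSum c x i) := by
  have hγ : ∀ i, (if i + 1 = K then c K else 1) ∈ Set.Icc (0 : ℝ) 1 := fun i => by
    split_ifs
    exacts [hc K, ⟨zero_le_one, le_rfl⟩]
  have hfract (y : ℝ) : Int.fract y ∈ Set.Ico 0 1 := ⟨Int.fract_nonneg y, Int.fract_lt_one y⟩
  intro i
  induction i with
  | zero =>
    intro _
    rw [layer_odd_eq]
    refine thresholdState_reluLayer hε (hγ 0) (hfract _) (hgap 0 (by omega)) le_rfl ?_ ?_
    · simp [slots, mulVecN, thresholdWeight, layer, ffLayers, hu, Int.fract_eq_self.2 hx]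
    · simp [slots, mulVecN, thresholdWeight, digitSum]
  | succ i ih =>
    intro hi
    have hodd := ih (by omega)
    rw [if_neg (by omega)] at hodd
    have hcarry := layer_even_eq (c := c) u hi ▸
      carryState_reluLayer hodd (hc (i + 1)) (hfract _) (digitSum_nonneg hc x i)
    obtain ⟨h0, h1, h2⟩ := hcarry
    rw [show 2 * (i + 1) + 1 = 2 * i + 2 + 1 by ring, layer_succ,
      weight_odd (by simp [parity_simps]), show 2 * i + 2 + 1 = 2 * (i + 1) + 1 by ring, bias_odd,
      slots_hidden (by omega) (by omega)]
    refine thresholdState_reluLayer hε (hγ _) (hfract _) (hgap _ hi)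
      (digitSum_nonneg hc x _) ?_ ?_
    · simp [mulVecN, Finset.sum_range_succ, thresholdWeight, h0, pow_succ', mul_assoc,
        ← Int.fract_two_mul]
    · simp [mulVecN, Finset.sum_range_succ, thresholdWeight, h1, h2, digitSum_succ]

lemma readout_zero (hε : 0 < ε) (hc : ∀ j, c j ∈ Set.Icc 0 1) (hK : 0 < K) {x : ℝ}
    (hx : x ∈ Set.Ico 0 1) (hgap : ∀ i < K, Int.fract (2 ^ i * x) ∉ Set.Ioo (1 / 2 - ε) (1 / 2))
    {u : ℕ → ℝ} (hu : u 0 = x) :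
    mulVecN (weight ε K (2 * K)) (slots K (2 * K - 1)) (layer ε K c u (2 * K - 1)) 0
      = digitSum c x K := by
  obtain ⟨i, rfl⟩ : ∃ i, K = i + 1 := ⟨K - 1, by omega⟩
  obtain ⟨-, h12, h3⟩ := thresholdState_layer hε hc hx hgap hu i (by omega)
  rw [if_pos rfl] at h12
  rw [show 2 * (i + 1) - 1 = 2 * i + 1 by omega, weight, if_pos rfl,
    slots_hidden (by omega) (by omega)]
  simp only [mulVecN, Finset.sum_range_succ, Finset.sum_range_zero, readoutWeight, digitSum_succ]
  linear_combination h12 + h3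

lemma readout_one (u : ℕ → ℝ) :
    mulVecN (weight ε K (2 * K)) (slots K (2 * K - 1)) (layer ε K c u (2 * K - 1)) 1 = 0 := by
  simp [weight, mulVecN, readoutWeight]

end DigitNet

def innerCoeff (d n p q j : ℕ) : ℝ :=
  2 * ((3 : ℝ) ^ (1 + d * n * (j - 1)))⁻¹ * ((3 : ℝ) ^ (p * n + q + 1))⁻¹

lemma innerCoeff_mem_Icc (d n p q j : ℕ) : innerCoeff d n p q j ∈ Set.Icc 0 1 := by
  refine ⟨by unfold innerCoeff; positivity, ?_⟩
  have h₁ : ((3 : ℝ) ^ (1 + d * n * (j - 1)))⁻¹ ≤ 3⁻¹ :=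
    inv_anti₀ (by norm_num) (le_self_pow₀ (by norm_num) (by omega))
  have h₂ : ((3 : ℝ) ^ (p * n + q + 1))⁻¹ ≤ 1 := inv_le_one_of_one_le₀ (one_le_pow₀ (by norm_num))
  calc innerCoeff d n p q j ≤ 2 * 3⁻¹ * 1 := by unfold innerCoeff; gcongr
    _ ≤ 1 := by norm_num

lemma digitSum_innerCoeff (d n p q K : ℕ) (x : ℝ) :
    DigitNet.digitSum (innerCoeff d n p q) x K
      = ((3 : ℝ) ^ (p * n + q + 1))⁻¹ * phiK (d * n) K x := by
  rw [DigitNet.digitSum, phiK, Finset.mul_sum, Finset.range_eq_Ico,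
    Finset.sum_Ico_add' (fun j => innerCoeff d n p q j * binDigit x j) 0 K 1]
  refine Finset.sum_congr rfl fun j _ => ?_
  rw [innerCoeff]; ring

lemma volume_Icc_inter_fract_mul_preimage_Ioo_le {N : ℕ} (hN : 0 < N) {a b : ℝ} (hab : a ≤ b) :
    volume (Set.Icc 0 1 ∩ (fun x : ℝ => Int.fract (N * x)) ⁻¹' Set.Ioo a b)
      ≤ ENNReal.ofReal (2 * (b - a)) := by
  have hN' : (0 : ℝ) < N := Nat.cast_pos.2 hN
  have hcover : Set.Icc 0 1 ∩ (fun x : ℝ => Int.fract (N * x)) ⁻¹' Set.Ioo a b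
      ⊆ ⋃ m ∈ range (N + 1), Set.Ioo ((m + a) / N) ((m + b) / N) := by
    rintro x ⟨⟨hx0, hx1⟩, hfr⟩
    obtain ⟨m, hm⟩ : ∃ m : ℕ, (m : ℤ) = ⌊(N : ℝ) * x⌋ :=
      Int.eq_ofNat_of_zero_le (Int.floor_nonneg.2 (by positivity)) |>.imp fun _ h => h.symm
    have hmN : m < N + 1 := by
      have : ⌊(N : ℝ) * x⌋ ≤ N := Int.floor_le_iff.2 (by push_cast; nlinarith)
      omega
    have hfr' : Int.fract ((N : ℝ) * x) ∈ Set.Ioo a b := hfr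
    rw [← Int.self_sub_floor, ← hm, Int.cast_natCast] at hfr'
    obtain ⟨hxa, hxb⟩ := hfr'
    refine Set.mem_biUnion (mem_range.2 hmN) ⟨?_, ?_⟩
    · rw [div_lt_iff₀ hN']; linarith
    · rw [lt_div_iff₀ hN']; linarith
  calc _ ≤ volume (⋃ m ∈ range (N + 1), Set.Ioo (((m : ℝ) + a) / N) ((m + b) / N)) :=
        measure_mono hcover
    _ ≤ ∑ m ∈ range (N + 1), volume (Set.Ioo (((m : ℝ) + a) / N) ((m + b) / N)) :=
        measure_biUnion_finset_le _ _
    _ = ∑ m ∈ range (N + 1), ENNReal.ofReal ((b - a) / N) :=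
        Finset.sum_congr rfl fun m _ => by rw [Real.volume_Ioo]; congr 1; ring
    _ = ENNReal.ofReal ((N + 1) * ((b - a) / N)) := by
        rw [sum_const, card_range, nsmul_eq_mul, ← ENNReal.ofReal_natCast,
          ← ENNReal.ofReal_mul (by positivity)]
        push_cast; rfl
    _ ≤ ENNReal.ofReal (2 * (b - a)) := by
        refine ENNReal.ofReal_le_ofReal ?_
        rw [← mul_div_assoc, div_le_iff₀ hN']
        have : (1 : ℝ) ≤ N := Nat.one_le_cast.2 hN
        nlinarith

def digitGapSet (ε : ℝ) (i : ℕ) : Set ℝ :=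
  Set.Icc 0 1 ∩ (fun x : ℝ => Int.fract (2 ^ i * x)) ⁻¹' Set.Ioo (1 / 2 - ε) (1 / 2)

lemma measurableSet_digitGapSet (ε : ℝ) (i : ℕ) : MeasurableSet (digitGapSet ε i) :=
  measurableSet_Icc.inter <| measurableSet_Ioo.preimage <|
    measurable_fract.comp (measurable_id.const_mul _)

lemma volume_digitGapSet_le {ε : ℝ} (hε : 0 ≤ ε) (i : ℕ) :
    volume (digitGapSet ε i) ≤ ENNReal.ofReal (2 * ε) := by
  have h := volume_Icc_inter_fract_mul_preimage_Ioo_le (N := 2 ^ i) (by positivity)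
    (a := 1 / 2 - ε) (b := 1 / 2) (by linarith)
  push_cast at h
  rwa [sub_sub_cancel] at h

def digitExceptionalSet (ε : ℝ) (K : ℕ) : Set ℝ := insert 1 (⋃ i ∈ range K, digitGapSet ε i)

lemma measurableSet_digitExceptionalSet (ε : ℝ) (K : ℕ) :
    MeasurableSet (digitExceptionalSet ε K) :=
  (Finset.measurableSet_biUnion _ fun i _ => measurableSet_digitGapSet ε i).insert 1

lemma digitExceptionalSet_subset (ε : ℝ) (K : ℕ) : digitExceptionalSet ε K ⊆ Set.Icc 0 1 :=
  Set.insert_subset (Set.right_mem_Icc.2 zero_le_one) <|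
    Set.iUnion₂_subset fun _ _ => Set.inter_subset_left

lemma volume_digitExceptionalSet_le {ε : ℝ} (hε : 0 ≤ ε) (K : ℕ) :
    volume (digitExceptionalSet ε K) ≤ ENNReal.ofReal (2 * K * ε) := by
  calc volume (digitExceptionalSet ε K) = volume (⋃ i ∈ range K, digitGapSet ε i) :=
        measure_congr (insert_ae_eq_self 1 _)
    _ ≤ ∑ i ∈ range K, volume (digitGapSet ε i) := measure_biUnion_finset_le _ _
    _ ≤ ∑ i ∈ range K, ENNReal.ofReal (2 * ε) :=
        Finset.sum_le_sum fun i _ => volume_digitGapSet_le hε i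
    _ = ENNReal.ofReal (2 * K * ε) := by
        rw [Finset.sum_const, card_range, nsmul_eq_mul, ← ENNReal.ofReal_natCast,
          ← ENNReal.ofReal_mul (by positivity)]
        ring_nf

lemma of_mem_Icc_diff_digitExceptionalSet {ε : ℝ} {K : ℕ} {x : ℝ}
    (hx : x ∈ Set.Icc 0 1 \ digitExceptionalSet ε K) :
    x ∈ Set.Ico 0 1 ∧ ∀ i < K, Int.fract (2 ^ i * x) ∉ Set.Ioo (1 / 2 - ε) (1 / 2) := by
  obtain ⟨⟨hx0, hx1⟩, hxΩ⟩ := hx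
  refine ⟨⟨hx0, lt_of_le_of_ne hx1 fun h => hxΩ (Or.inl h)⟩, fun i hi hgap => hxΩ (Or.inr ?_)⟩
  exact Set.mem_biUnion (mem_range.2 hi) ⟨⟨hx0, hx1⟩, hgap⟩

def innerBlock (d n K : ℕ) (ε : ℝ) : (ℕ → ℕ → ℝ) → ℕ → ℕ → ℝ :=
  parallelBlock d (DigitNet.weight ε K) (fun p q => DigitNet.bias ε K (innerCoeff d n p q))
    (fun _ _ => reluF) (DigitNet.slots K) (2 * K)

lemma isFFBlock_innerBlock {d n K : ℕ} (hn : 1 ≤ n) (hK : 1 ≤ K) (ε : ℝ) :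
    IsFFBlock d (2 * d) (2 * K) (4 * d * n) {reluF} (innerBlock d n K ε) := by
  have h := isFFBlock_parallelBlock (d := d) (W := 4 * d * n) (A := {reluF})
    (DigitNet.weight ε K) (fun p q => DigitNet.bias ε K (innerCoeff d n p q)) (fun _ _ => reluF)
    (m := DigitNet.slots K) (L := 2 * K) rfl
    (fun l hl hlK => by rw [DigitNet.slots_hidden hl hlK]; nlinarith)
    (fun _ _ => rfl)
  rwa [DigitNet.slots, if_neg (by omega), if_pos rfl] at h

lemma innerBlock_embedM {d n K : ℕ} (hK : 1 ≤ K) {ε : ℝ} (hε : 0 < ε) {X : Fin d → Fin n → ℝ}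
    (hX : ∀ i j, X i j ∈ Set.Icc 0 1 \ digitExceptionalSet ε K) (p : Fin d) (q : Fin n) :
    innerBlock d n K ε (embedM X) p q
        = ((3 : ℝ) ^ ((p : ℕ) * n + q + 1))⁻¹ * phiK (d * n) K (X p q) ∧
      innerBlock d n K ε (embedM X) (p + d) q = 0 := by
  obtain ⟨hx, hgap⟩ := of_mem_Icc_diff_digitExceptionalSet (hX p q)
  have hblock (k : ℕ) := parallelBlock_apply (DigitNet.weight ε K)
    (fun p q => DigitNet.bias ε K (innerCoeff d n p q)) (fun _ _ => reluF) p.isLt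
    (DigitNet.slots K) (2 * K) k (embedM X) q
  constructor
  · have h0 := hblock 0
    rw [zero_mul, add_zero] at h0
    rw [innerBlock, h0, ← digitSum_innerCoeff]
    refine DigitNet.readout_zero hε (innerCoeff_mem_Icc d n p q) (by omega) hx hgap ?_
    simp [embedM]
  · have h1 := hblock 1
    rw [one_mul] at h1
    rw [innerBlock, h1]
    exact DigitNet.readout_one _

lemma sum_innerBlock_embedM {d n K : ℕ} (hK : 1 ≤ K) {ε : ℝ} (hε : 0 < ε)
    {X : Fin d → Fin n → ℝ} (hX : ∀ i j, X i j ∈ Set.Icc 0 1 \ digitExceptionalSet ε K) :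
    ∑ t ∈ range (2 * d), ∑ a ∈ range n, innerBlock d n K ε (embedM X) t a
      = ∑ q : Fin n, ∑ p : Fin d, ((3 : ℝ) ^ ((p : ℕ) * n + q + 1))⁻¹ * phiK (d * n) K (X p q) := by
  have hzero : ∑ p ∈ range d, ∑ a ∈ range n, innerBlock d n K ε (embedM X) (p + d) a = 0 :=
    sum_eq_zero fun p hp => sum_eq_zero fun a ha =>
      (innerBlock_embedM hK hε hX ⟨p, mem_range.1 hp⟩ ⟨a, mem_range.1 ha⟩).2
  rw [Finset.sum_range_mul_eq_sum_sum, Finset.sum_range_succ, Finset.sum_range_one]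
  simp only [zero_mul, add_zero, one_mul]
  rw [hzero, add_zero, Finset.sum_comm, ← Fin.sum_univ_eq_sum_range]
  refine Finset.sum_congr rfl fun q _ => ?_
  rw [← Fin.sum_univ_eq_sum_range]
  exact Finset.sum_congr rfl fun p _ => (innerBlock_embedM hK hε hX p q).1

def selfAttn (m n hs : ℕ) (WO WV WK WQ : ℕ → ℕ → ℝ) (X : ℕ → ℕ → ℝ) (i j : ℕ) : ℝ :=
  X i j +
    matMulN (matMulN WO hs WV) m
      (matMulN X n (fun a b =>
        Real.exp (∑ u ∈ Finset.range hs, matMulN WK m X u a * matMulN WQ m X u b) /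
          ∑ t ∈ Finset.range n,
            Real.exp (∑ u ∈ Finset.range hs, matMulN WK m X u t * matMulN WQ m X u b))) i j

lemma isSelfAttn_selfAttn (m n hs : ℕ) (WO WV WK WQ : ℕ → ℕ → ℝ) :
    IsSelfAttn m n (selfAttn m n hs WO WV WK WQ) :=
  ⟨hs, WO, WV, WK, WQ, fun _ _ _ => rfl⟩

lemma selfAttn_zero_keys {m n : ℕ} (hs : ℕ) (WO WV : ℕ → ℕ → ℝ)
    (X : ℕ → ℕ → ℝ) (i j : ℕ) :
    selfAttn m n hs WO WV 0 0 X i j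
      = X i j + (∑ t ∈ range m, matMulN WO hs WV i t * ∑ a ∈ range n, X t a) / n := by
  simp only [selfAttn, matMulN, Pi.zero_apply, zero_mul, Finset.sum_const_zero, Real.exp_zero,
    Finset.sum_const, card_range, nsmul_eq_mul, mul_one, Finset.sum_div, Finset.mul_sum]
  congr 1
  exact Finset.sum_congr rfl fun _ _ => Finset.sum_congr rfl fun _ _ => by ring

theorem stmt4_general (d n K : ℕ) (hd : 1 ≤ d) (hn : 1 ≤ n) (hK : 1 ≤ K)
    (β : ℝ) (p : ℝ) :
    ∃ Ω : Set ℝ, MeasurableSet Ω ∧ Ω ⊆ Set.Icc 0 1 ∧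
      volume Ω ≤ ENNReal.ofReal ((2:ℝ) ^ (-((K : ℝ) * β * p))) ∧
      ∃ Fsr FSA Aff : (ℕ → ℕ → ℝ) → ℕ → ℕ → ℝ,
        IsFFBlock d (2 * d) (2 * K) (4 * d * n) {reluF} Fsr ∧
        IsSelfAttn (2 * d) n FSA ∧
        IsAffineM (2 * d) Aff ∧
        ∀ X : Fin d → Fin n → ℝ, (∀ i j, X i j ∈ Set.Icc (0:ℝ) 1 \ Ω) →
          ∀ (r : Fin d) (s : Fin n),
            Aff (FSA (Fsr (embedM X))) (r : ℕ) (s : ℕ) = innerZ d n K X s := by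
  set ε : ℝ := (2:ℝ) ^ (-((K : ℝ) * β * p)) / (2 * K)
  have hε : 0 < ε := by positivity
  have hK' : (K : ℝ) ≠ 0 := by positivity
  -- `FSA` adds to row `d`, which `innerBlock` leaves zero, the column mean of the first `d` rows.
  refine ⟨digitExceptionalSet ε K, measurableSet_digitExceptionalSet ε K,
    digitExceptionalSet_subset ε K,
    (volume_digitExceptionalSet_le hε.le K).trans_eq (by congr 1; simp only [ε]; field_simp),
    innerBlock d n K ε, selfAttn (2 * d) n 1 (fun i _ => if i = d then 1 else 0) (fun _ _ => 1) 0 0,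
    fun Y i s => mulVecN (fun _ t => if t = d then n * 3 ^ (K * d * n + 1) else 0) (2 * d)
      (fun t => Y t s) i + (1 + s * 3 ^ (K * d * n)),
    isFFBlock_innerBlock hn hK ε, isSelfAttn_selfAttn _ _ _ _ _ _ _, ⟨_, _, fun _ _ _ => rfl⟩, ?_⟩
  intro X hX r s
  have hrow : innerBlock d n K ε (embedM X) d s = 0 := by
    simpa using (innerBlock_embedM hK hε hX ⟨0, hd⟩ s).2
  simp only [mulVecN, ite_mul, zero_mul, Finset.sum_ite_eq', Finset.mem_range, selfAttn_zero_keys]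
  have hWOV : ∀ t, matMulN (fun i _ => if i = d then (1 : ℝ) else 0) 1 (fun _ _ => 1) d t = 1 := by
    simp [matMulN]
  rw [if_pos (by omega), hrow]
  simp only [hWOV, one_mul, sum_innerBlock_embedM hK hε hX, innerZ]
  have hn' : (n : ℝ) ≠ 0 := by positivity
  field_simp
  ring

theorem stmt4 (d n K : ℕ) (hd : 1 ≤ d) (hn : 1 ≤ n) (hK : 1 ≤ K)
    (β : ℝ) (hβ0 : 0 < β) (hβ1 : β ≤ 1) (p : ℝ) (hp : 1 ≤ p) :
    ∃ Ω : Set ℝ, MeasurableSet Ω ∧ Ω ⊆ Set.Icc 0 1 ∧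
      volume Ω ≤ ENNReal.ofReal ((2:ℝ) ^ (-((K : ℝ) * β * p))) ∧
      ∃ Fsr FSA Aff : (ℕ → ℕ → ℝ) → ℕ → ℕ → ℝ,
        IsFFBlock d (2 * d) (2 * K) (4 * d * n) {reluF} Fsr ∧
        IsSelfAttn (2 * d) n FSA ∧
        IsAffineM (2 * d) Aff ∧
        ∀ X : Fin d → Fin n → ℝ, (∀ i j, X i j ∈ Set.Icc (0:ℝ) 1 \ Ω) →
          ∀ (r : Fin d) (s : Fin n),
            Aff (FSA (Fsr (embedM X))) (r : ℕ) (s : ℕ) = innerZ d n K X s :=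
  stmt4_general d n K hd hn hK β p
end
end

section
/- Let M ∈ ℕ with M ≥ 1, and let θ_1, …, θ_M ∈ {0,1}. Then there exists a feedforward network f : ℝ → ℝ of depth 4 and width 2 with activation functions ReLU, sine and x ↦ 2^x such that f(m) = θ_m for every m ∈ {1, …, M}. -/
open Finset Real Set MeasureTheory

noncomputable section

/-!
Put `a = π ∑_{j=1}^M (θ_j - 1/2) 8^{-j}`. Multiplying by `8^m = 2^{3m}` turns the terms with
`j < m` into even integers, which `sin (π ·)` does not see, and the terms with `j > m` into an
error `ε` with `|ε| ≤ 1/14`. Hence `sin (a 2^{3m}) = sin (π (θ_m - 1/2 + ε)) = ± cos (π ε)` is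
`≤ 0` if `θ_m = 0` and `≥ 1/2` if `θ_m = 1`, and `u ↦ relu (2u) - relu (2u - 1)` rounds it to
`θ_m`. The network is `x ↦ 2^{3x} ↦ sin (a ·) ↦ (relu (2 ·), relu (2 · - 1)) ↦ difference`.
-/

lemma sin_pi_mul_add_of_mem_zmultiples_two {x : ℝ} (hx : x ∈ AddSubgroup.zmultiples (2 : ℝ))
    (y : ℝ) : sin (π * (x + y)) = sin (π * y) := by
  obtain ⟨k, rfl⟩ := hx
  rw [show π * (k • (2 : ℝ) + y) = π * y + k * (2 * π) by rw [zsmul_eq_mul]; ring]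
  exact sin_add_int_mul_two_pi _ _

lemma sub_half_mul_eight_pow_mem_zmultiples_two {t : ℝ} (ht : t = 0 ∨ t = 1) {k : ℕ}
    (hk : k ≠ 0) : (t - 1 / 2) * 8 ^ k ∈ AddSubgroup.zmultiples (2 : ℝ) := by
  obtain ⟨k, rfl⟩ := Nat.exists_eq_add_one_of_ne_zero hk
  rcases ht with rfl | rfl
  · exact ⟨-(2 * 8 ^ k), by push_cast; ring⟩
  · exact ⟨2 * 8 ^ k, by push_cast; ring⟩

lemma abs_sum_Ico_mul_inv_eight_pow_mul_le {c : ℕ → ℝ} {C : ℝ} {m n : ℕ} (hC : 0 ≤ C)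
    (hc : ∀ j ∈ Finset.Ico (m + 1) n, |c j| ≤ C) :
    |∑ j ∈ Finset.Ico (m + 1) n, c j * 8⁻¹ ^ j * 8 ^ m| ≤ C / 7 := by
  calc |∑ j ∈ Finset.Ico (m + 1) n, c j * 8⁻¹ ^ j * 8 ^ m|
      ≤ ∑ j ∈ Finset.Ico (m + 1) n, C * 8⁻¹ ^ j * 8 ^ m :=
        (abs_sum_le_sum_abs _ _).trans <| Finset.sum_le_sum fun j hj => by
          rw [abs_mul, abs_mul, abs_of_pos (by positivity : (0 : ℝ) < 8⁻¹ ^ j),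
            abs_of_pos (by positivity : (0 : ℝ) < 8 ^ m)]
          gcongr
          exact hc j hj
    _ = C * 8 ^ m * ∑ j ∈ Finset.Ico (m + 1) n, (8⁻¹ : ℝ) ^ j := by
        rw [Finset.mul_sum]; exact Finset.sum_congr rfl fun j _ => by ring
    _ ≤ C * 8 ^ m * (8⁻¹ ^ (m + 1) / (1 - 8⁻¹)) := by
        gcongr; exact geom_sum_Ico_le_of_lt_one (by norm_num) (by norm_num)
    _ = C / 7 := by
        rw [inv_pow, pow_succ]; field_simp; ring

def bitCode (θ : ℕ → ℝ) (M : ℕ) : ℝ :=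
  ∑ j ∈ Finset.Ico 1 (M + 1), (θ j - 1 / 2) * 8⁻¹ ^ j

lemma exists_sin_pi_mul_bitCode_mul_eight_pow {θ : ℕ → ℝ} {M m : ℕ}
    (hθ : ∀ j ∈ Finset.Icc 1 M, θ j = 0 ∨ θ j = 1) (hm : m ∈ Finset.Icc 1 M) :
    ∃ ε, |ε| ≤ 1 / 14 ∧ sin (π * bitCode θ M * 8 ^ m) = sin (π * (θ m - 1 / 2 + ε)) := by
  obtain ⟨hm1, hmM⟩ := Finset.mem_Icc.mp hm
  set c : ℕ → ℝ := fun j => (θ j - 1 / 2) * 8⁻¹ ^ j * 8 ^ m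
  have hsplit : bitCode θ M * 8 ^ m
      = ∑ j ∈ Finset.Ico 1 m, c j + ((θ m - 1 / 2) + ∑ j ∈ Finset.Ico (m + 1) (M + 1), c j) := by
    rw [bitCode, Finset.sum_mul, ← Finset.sum_Ico_consecutive _ hm1 (by omega : m ≤ M + 1),
      Finset.sum_eq_sum_Ico_succ_bot (by omega : m < M + 1)]
    simp only [c, inv_pow, mul_assoc, inv_mul_cancel₀ (pow_ne_zero m (by norm_num : (8 : ℝ) ≠ 0)),
      mul_one]
  have hhead : ∑ j ∈ Finset.Ico 1 m, c j ∈ AddSubgroup.zmultiples (2 : ℝ) :=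
    AddSubgroup.sum_mem _ fun j hj => by
      obtain ⟨hj1, hjm⟩ := Finset.mem_Ico.mp hj
      have hpow : (8 : ℝ)⁻¹ ^ j * 8 ^ m = 8 ^ (m - j) := by
        rw [pow_sub₀ _ (by norm_num) hjm.le, inv_pow]; ring
      simp only [c, mul_assoc, hpow]
      exact sub_half_mul_eight_pow_mem_zmultiples_two (hθ j (by simp; omega)) (by omega)
  have htail : |∑ j ∈ Finset.Ico (m + 1) (M + 1), c j| ≤ 1 / 14 :=
    (abs_sum_Ico_mul_inv_eight_pow_mul_le (c := fun j => θ j - 1 / 2) (C := 1 / 2) (by norm_num)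
      fun j hj => by
        rcases hθ j (by simp at hj ⊢; omega) with h | h <;> norm_num [h, abs_of_pos]).trans_eq
      (by norm_num)
  refine ⟨_, htail, ?_⟩
  rw [mul_assoc, hsplit, sin_pi_mul_add_of_mem_zmultiples_two hhead]

lemma one_half_le_cos_pi_mul {ε : ℝ} (hε : |ε| ≤ 1 / 3) : 1 / 2 ≤ cos (π * ε) := by
  rw [← cos_abs, ← cos_pi_div_three, abs_mul, abs_of_pos pi_pos]
  exact cos_le_cos_of_nonneg_of_le_pi (by positivity) (by linarith [pi_pos])
    (by nlinarith [pi_pos])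

def reluStep (u : ℝ) : ℝ := reluF (2 * u) - reluF (2 * u - 1)

lemma reluStep_of_nonpos {u : ℝ} (hu : u ≤ 0) : reluStep u = 0 := by
  simp only [reluStep, reluF]
  rw [max_eq_right (by linarith), max_eq_right (by linarith), sub_self]

lemma reluStep_of_one_half_le {u : ℝ} (hu : 1 / 2 ≤ u) : reluStep u = 1 := by
  simp only [reluStep, reluF]
  rw [max_eq_left (by linarith), max_eq_left (by linarith)]
  ring

lemma reluStep_sin_pi_mul_sub_one_half_add {t ε : ℝ} (ht : t = 0 ∨ t = 1) (hε : |ε| ≤ 1 / 3) :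
    reluStep (sin (π * (t - 1 / 2 + ε))) = t := by
  have hcos := one_half_le_cos_pi_mul hε
  rcases ht with rfl | rfl
  · rw [show π * (0 - 1 / 2 + ε) = π * ε - π / 2 by ring, sin_sub_pi_div_two]
    exact reluStep_of_nonpos (by linarith)
  · rw [show π * (1 - 1 / 2 + ε) = π * ε + π / 2 by ring, sin_add_pi_div_two]
    exact reluStep_of_one_half_le hcos

def sinNetDims : ℕ → ℕ := fun l => if l = 3 then 2 else 1

def sinNetWeights (a : ℝ) : ℕ → ℕ → ℕ → ℝ := fun l _ j =>
  if l = 1 then 3 else if l = 2 then a else if l = 3 then 2 else if j = 0 then 1 else -1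

def sinNetBias : ℕ → ℕ → ℝ := fun l i => if l = 3 ∧ i = 1 then -1 else 0

def sinNetAct : ℕ → ℕ → ℝ → ℝ := fun l _ =>
  if l = 1 then (fun x => (2 : ℝ) ^ x) else if l = 2 then sin else reluF

def sinNet (a : ℝ) : (ℕ → ℝ) → ℕ → ℝ := fun x =>
  mulVecN (sinNetWeights a 4) (sinNetDims 3)
    (ffLayers sinNetDims (sinNetWeights a) sinNetBias sinNetAct 3 x)

lemma isFFNet_sinNet (a : ℝ) :
    IsFFNet 1 1 4 2 {reluF, sin, fun x => (2 : ℝ) ^ x} (sinNet a) := by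
  refine ⟨sinNetDims, sinNetWeights a, sinNetBias, sinNetAct, rfl, rfl,
    fun l _ _ => by unfold sinNetDims; split <;> omega, fun l i => ?_, fun x => rfl⟩
  unfold sinNetAct
  split_ifs <;> simp

lemma sinNet_apply (a : ℝ) (x : ℕ → ℝ) :
    sinNet a x 0 = reluStep (sin (a * 2 ^ (3 * x 0))) := by
  simp [sinNet, mulVecN, ffLayers, sinNetDims, sinNetWeights, sinNetBias, sinNetAct, reluStep,
    sub_eq_add_neg, Finset.sum_range_succ]

theorem stmt12_general (M : ℕ) (θ : ℕ → ℝ)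
    (hθ : ∀ m ∈ Finset.Icc 1 M, θ m = 0 ∨ θ m = 1) :
    ∃ F : (ℕ → ℝ) → ℕ → ℝ,
      IsFFNet 1 1 4 2 {reluF, Real.sin, fun x => (2:ℝ) ^ x} F ∧
      ∀ m ∈ Finset.Icc 1 M, F (fun _ => (m : ℝ)) 0 = θ m := by
  refine ⟨sinNet (π * bitCode θ M), isFFNet_sinNet _, fun m hm => ?_⟩
  obtain ⟨ε, hε, hsin⟩ := exists_sin_pi_mul_bitCode_mul_eight_pow hθ hm
  have h8 : (2 : ℝ) ^ (3 * (m : ℝ)) = 8 ^ m := by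
    rw [Real.rpow_mul (by norm_num), Real.rpow_natCast]; norm_num
  rw [sinNet_apply, h8, hsin]
  exact reluStep_sin_pi_mul_sub_one_half_add (hθ m hm) (hε.trans (by norm_num))

theorem stmt12 (M : ℕ) (hM : 1 ≤ M) (θ : ℕ → ℝ)
    (hθ : ∀ m ∈ Finset.Icc 1 M, θ m = 0 ∨ θ m = 1) :
    ∃ F : (ℕ → ℝ) → ℕ → ℝ,
      IsFFNet 1 1 4 2 {reluF, Real.sin, fun x => (2:ℝ) ^ x} F ∧
      ∀ m ∈ Finset.Icc 1 M, F (fun _ => (m : ℝ)) 0 = θ m :=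
  stmt12_general M θ hθ

end
end

section
/- Let M ∈ ℕ with M ≥ 1, and let θ_1, …, θ_M ∈ {0,1}. Then there exists a feedforward network f : ℝ → ℝ of depth 5 and width 1 with activation functions ReLU, cosine and x ↦ 3^x such that f(m) = θ_m for every m ∈ {1, …, M}. -/
/-!
The bits are stored as the ternary digits `2 θ_k ∈ {0, 2}` of `t = ∑ 2 θ_k 3^{-(k+1)}`.
Multiplying by `3^m` moves digit `m` to the first place after the point; the digits before it
become an even integer, which `cos (π ·)` ignores, and the digits after it add at most `1/3`.
So `cos (π t 3^m)` is `≥ 1/2` when `θ_m = 0` and `≤ 0` when `θ_m = 1`, and the two ReLU layers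
`y ↦ relu (1 - 2 relu y)` round it to `θ_m`.
-/

open Finset Real Set MeasureTheory

noncomputable section

def scalarChain (w c : ℕ → ℝ) (σ : ℕ → ℝ → ℝ) : ℕ → ℝ → ℝ
  | 0, x => x
  | l + 1, x => σ (l + 1) (w (l + 1) * scalarChain w c σ l x + c (l + 1))

lemma ffLayers_one_eq_scalarChain (w c : ℕ → ℝ) (σ : ℕ → ℝ → ℝ) (l : ℕ) (x : ℕ → ℝ) :
    ffLayers (fun _ => 1) (fun l _ _ => w l) (fun l _ => c l) (fun l _ => σ l) l x 0
      = scalarChain w c σ l (x 0) := by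
  induction l with
  | zero => rfl
  | succ l ih => simp [ffLayers, scalarChain, mulVecN, ih]

lemma isFFNet_scalarChain {A : Set (ℝ → ℝ)} (w c : ℕ → ℝ) (σ : ℕ → ℝ → ℝ)
    (hσ : ∀ l, σ l ∈ A) (L : ℕ) :
    IsFFNet 1 1 (L + 1) 1 A (fun x _ => w (L + 1) * scalarChain w c σ L (x 0)) := by
  refine ⟨fun _ => 1, fun l _ _ => w l, fun l _ => c l, fun l _ => σ l,
    rfl, rfl, fun _ _ _ => le_rfl, fun l _ => hσ l, fun x => ?_⟩
  funext i
  simp [mulVecN, ffLayers_one_eq_scalarChain]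

lemma sum_pow_le_of_forall_lt {K : Type*} [Field K] [LinearOrder K] [IsStrictOrderedRing K]
    {x : K} (hx₀ : 0 ≤ x) (hx₁ : x < 1) {T : Finset ℕ} {m : ℕ} (hT : ∀ k ∈ T, m < k) :
    ∑ k ∈ T, x ^ k ≤ x ^ (m + 1) / (1 - x) := by
  have hsub : T ⊆ Finset.Ico (m + 1) (T.sup id + 1) := fun k hk =>
    Finset.mem_Ico.2 ⟨hT k hk, Nat.lt_succ_of_le (Finset.le_sup (f := id) hk)⟩
  calc ∑ k ∈ T, x ^ k ≤ ∑ k ∈ Finset.Ico (m + 1) (T.sup id + 1), x ^ k :=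
        Finset.sum_le_sum_of_subset_of_nonneg hsub fun _ _ _ => pow_nonneg hx₀ _
    _ ≤ x ^ (m + 1) / (1 - x) := geom_sum_Ico_le_of_lt_one hx₀ hx₁

lemma exists_sum_mul_natCast_eq {s : Finset ℕ} {θ : ℕ → ℝ}
    (hθ : ∀ k ∈ s, θ k = 0 ∨ θ k = 1) (a : ℕ → ℕ) :
    ∃ n : ℕ, ∑ k ∈ s, θ k * a k = n := by
  refine Finset.sum_induction _ (fun y : ℝ => ∃ n : ℕ, y = n)
    (fun _ _ ⟨p, hp⟩ ⟨q, hq⟩ => ⟨p + q, by simp [hp, hq]⟩) ⟨0, Nat.cast_zero.symm⟩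
    fun k hk => ?_
  rcases hθ k hk with h | h
  · exact ⟨0, by simp [h]⟩
  · exact ⟨a k, by simp [h]⟩

lemma three_pow_mul_inv_pow (m : ℕ) : (3 : ℝ) ^ m * 3⁻¹ ^ m = 1 := by
  rw [← mul_pow, mul_inv_cancel₀ three_ne_zero, one_pow]

lemma three_pow_mul_inv_pow_of_lt {k m : ℕ} (h : k < m) :
    (3 : ℝ) ^ m * 3⁻¹ ^ (k + 1) = (3 ^ (m - (k + 1)) : ℕ) := by
  rw [← Nat.sub_add_cancel (Nat.succ_le_of_lt h), pow_add, mul_assoc,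
    three_pow_mul_inv_pow, mul_one, Nat.add_sub_cancel, Nat.cast_pow, Nat.cast_ofNat]

lemma sum_three_pow_mul_le_of_forall_lt {T : Finset ℕ} {θ : ℕ → ℝ}
    (hθ : ∀ k ∈ T, 0 ≤ θ k ∧ θ k ≤ 1) {m : ℕ} (hT : ∀ k ∈ T, m < k) :
    ∑ k ∈ T, 3 ^ m * (2 * θ k * 3⁻¹ ^ (k + 1)) ≤ 1 / 3 :=
  calc ∑ k ∈ T, 3 ^ m * (2 * θ k * 3⁻¹ ^ (k + 1))
      ≤ ∑ k ∈ T, 2 * 3 ^ m * 3⁻¹ * (3⁻¹ : ℝ) ^ k :=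
        Finset.sum_le_sum fun k hk => by
          rw [show 3 ^ m * (2 * θ k * 3⁻¹ ^ (k + 1)) = θ k * (2 * 3 ^ m * 3⁻¹ * 3⁻¹ ^ k) by ring]
          exact mul_le_of_le_one_left (by positivity) (hθ k hk).2
    _ ≤ 2 * 3 ^ m * 3⁻¹ * ((3⁻¹ : ℝ) ^ (m + 1) / (1 - 3⁻¹)) := by
        rw [← Finset.mul_sum]
        gcongr
        exact sum_pow_le_of_forall_lt (by norm_num) (by norm_num) hT
    _ = 2 * (3 ^ m * 3⁻¹ ^ m) * 3⁻¹ * 3⁻¹ / (1 - 3⁻¹) := by ring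
    _ = 1 / 3 := by rw [three_pow_mul_inv_pow]; norm_num

lemma exists_three_pow_mul_sum_eq {s : Finset ℕ} {θ : ℕ → ℝ}
    (hθ : ∀ k ∈ s, θ k = 0 ∨ θ k = 1) {m : ℕ} (hm : m ∈ s) :
    ∃ (n : ℕ) (r : ℝ), 0 ≤ r ∧ r ≤ 1 / 3 ∧
      3 ^ m * ∑ k ∈ s, 2 * θ k * 3⁻¹ ^ (k + 1) = 2 * n + 2 * θ m / 3 + r := by
  classical
  set T := (s.erase m).filter (m < ·)
  have hθT : ∀ k ∈ T, 0 ≤ θ k ∧ θ k ≤ 1 := fun k hk => by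
    rcases hθ k (Finset.mem_of_mem_erase (Finset.mem_filter.1 hk).1) with h | h <;> simp [h]
  obtain ⟨n, hn⟩ := exists_sum_mul_natCast_eq (s := (s.erase m).filter (· < m))
    (fun k hk => hθ k (Finset.mem_of_mem_erase (Finset.mem_filter.1 hk).1))
    (fun k => 3 ^ (m - (k + 1)))
  have hhead : ∑ k ∈ (s.erase m).filter (· < m), 3 ^ m * (2 * θ k * 3⁻¹ ^ (k + 1))
      = 2 * n := by
    rw [← hn, Finset.mul_sum]
    refine Finset.sum_congr rfl fun k hk => ?_
    rw [← three_pow_mul_inv_pow_of_lt (Finset.mem_filter.1 hk).2]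
    ring
  have hdigit : (3 : ℝ) ^ m * (2 * θ m * 3⁻¹ ^ (m + 1)) = 2 * θ m / 3 := by
    linear_combination (2 * θ m / 3) * three_pow_mul_inv_pow m
  have htail := sum_three_pow_mul_le_of_forall_lt hθT fun k hk => (Finset.mem_filter.1 hk).2
  refine ⟨n, ∑ k ∈ T, 3 ^ m * (2 * θ k * 3⁻¹ ^ (k + 1)),
    Finset.sum_nonneg fun k hk => by have := (hθT k hk).1; positivity, htail, ?_⟩
  rw [Finset.mul_sum, ← Finset.add_sum_erase _ _ hm,
    ← Finset.sum_filter_add_sum_filter_not (s.erase m) (· < m), hhead, hdigit]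
  have hT : (s.erase m).filter (fun k => ¬k < m) = T := by
    ext k
    simp only [T, Finset.mem_filter, Finset.mem_erase]
    exact and_congr_right fun h => by have := h.1; omega
  rw [hT]
  ring

lemma reluF_neg_two_mul_reluF_add_one_of_half_le {c : ℝ} (hc : 1 / 2 ≤ c) :
    reluF (-2 * reluF c + 1) = 0 := by
  simp only [reluF]
  rw [max_eq_left (a := c) (by linarith), max_eq_right (by linarith)]

lemma reluF_neg_two_mul_reluF_add_one_of_nonpos {c : ℝ} (hc : c ≤ 0) :
    reluF (-2 * reluF c + 1) = 1 := by
  simp only [reluF]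
  rw [max_eq_right hc]
  norm_num

lemma reluF_neg_two_mul_reluF_cos_digit {b r : ℝ} (hb : b = 0 ∨ b = 1) (hr₀ : 0 ≤ r)
    (hr₁ : r ≤ 1 / 3) :
    reluF (-2 * reluF (Real.cos (π * (2 * b / 3 + r))) + 1) = b := by
  have hπ := Real.pi_pos
  rcases hb with rfl | rfl
  · apply reluF_neg_two_mul_reluF_add_one_of_half_le
    calc 1 / 2 = Real.cos (π / 3) := Real.cos_pi_div_three.symm
      _ ≤ Real.cos (π * (2 * 0 / 3 + r)) :=
        Real.cos_le_cos_of_nonneg_of_le_pi (by positivity) (by linarith) (by nlinarith)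
  · apply reluF_neg_two_mul_reluF_add_one_of_nonpos
    exact Real.cos_nonpos_of_pi_div_two_le_of_le (by nlinarith) (by nlinarith)

theorem stmt13_general (M : ℕ) (θ : ℕ → ℝ)
    (hθ : ∀ m ∈ Finset.Icc 1 M, θ m = 0 ∨ θ m = 1) :
    ∃ F : (ℕ → ℝ) → ℕ → ℝ,
      IsFFNet 1 1 5 1 {reluF, Real.cos, fun x => (3:ℝ) ^ x} F ∧
      ∀ m ∈ Finset.Icc 1 M, F (fun _ => (m : ℝ)) 0 = θ m := by
  set t : ℝ := ∑ k ∈ Finset.Icc 1 M, 2 * θ k * 3⁻¹ ^ (k + 1)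
  -- the network `x ↦ relu (1 - 2 relu (cos (π t 3^x)))`
  let w : ℕ → ℝ := fun l => if l = 2 then π * t else if l = 4 then -2 else 1
  let c : ℕ → ℝ := fun l => if l = 4 then 1 else 0
  let σ : ℕ → ℝ → ℝ := fun l => if l = 1 then fun x => (3 : ℝ) ^ x
    else if l = 2 then Real.cos else reluF
  have hσ : ∀ l, σ l ∈ ({reluF, Real.cos, fun x => (3:ℝ) ^ x} : Set (ℝ → ℝ)) := fun l => by
    by_cases h₁ : l = 1 <;> by_cases h₂ : l = 2 <;> simp [σ, h₁, h₂]
  refine ⟨_, isFFNet_scalarChain w c σ hσ 4, fun m hm => ?_⟩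
  obtain ⟨n, r, hr₀, hr₁, hsum⟩ := exists_three_pow_mul_sum_eq hθ hm
  have hcos : Real.cos (π * t * 3 ^ m) = Real.cos (π * (2 * θ m / 3 + r)) := by
    rw [mul_assoc, mul_comm t, hsum, ← Real.cos_add_nat_mul_two_pi (π * (2 * θ m / 3 + r)) n]
    congr 1
    ring
  have hchain : w 5 * scalarChain w c σ 4 m
      = reluF (-2 * reluF (Real.cos (π * t * 3 ^ m)) + 1) := by
    simp [scalarChain, w, c, σ, Real.rpow_natCast]
  rw [hchain, hcos]
  exact reluF_neg_two_mul_reluF_cos_digit (hθ m hm) hr₀ hr₁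

theorem stmt13 (M : ℕ) (hM : 1 ≤ M) (θ : ℕ → ℝ)
    (hθ : ∀ m ∈ Finset.Icc 1 M, θ m = 0 ∨ θ m = 1) :
    ∃ F : (ℕ → ℝ) → ℕ → ℝ,
      IsFFNet 1 1 5 1 {reluF, Real.cos, fun x => (3:ℝ) ^ x} F ∧
      ∀ m ∈ Finset.Icc 1 M, F (fun _ => (m : ℝ)) 0 = θ m :=
  stmt13_general M θ hθ

end
end
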